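/- Let H : ℝ² → ℝ be a twice continuously differentiable function with nowhere-vanishing gradient on an open set U. Then the vector field ∇H/|∇H| has vanishing curl on U (i.e., ∂/∂y of its first component equals ∂/∂x of its second component) if and only if H_{xy}(H_x² - H_y²) = H_x H_y (H_{xx} - H_{yy}) on U. -/

import Mathlib

/-- Partial derivative in the first variable. -/
noncomputable def px (f : ℝ × ℝ → ℝ) (p : ℝ × ℝ) : ℝ := deriv (fun x => f (x, p.2)) p.1

/-- Partial derivative in the second variable. -/
noncomputable def py (f : ℝ × ℝ → ℝ) (p : ℝ × ℝ) : ℝ := deriv (fun y => f (p.1, y)) p.2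

/-!
Write `a = H_x`, `b = H_y` and `r = √(a² + b²)`. Along any line, the derivative of `b / r` is
`a (a b' - b a') / r³` and that of `a / r` is `b (b a' - a b') / r³`. Hence the curl of `∇H / r` is
`(a² H_yx - a b H_xx - b² H_xy + a b H_yy) / r³`, and by symmetry of second derivatives
(`H_xy = H_yx`, which needs `H ∈ C²`) its numerator is `H_xy (a² - b²) - a b (H_xx - H_yy)`.
Since `r > 0`, the curl vanishes exactly where this numerator does.
-/

open Real

section PartialDerivatives

variable {f : ℝ × ℝ → ℝ} {p : ℝ × ℝ}

theorem DifferentiableAt.hasDerivAt_px (hf : DifferentiableAt ℝ f p) :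
    HasDerivAt (fun x => f (x, p.2)) (px f p) p.1 :=
  (hf.comp p.1 (differentiableAt_id.prodMk (differentiableAt_const _))).hasDerivAt

theorem DifferentiableAt.hasDerivAt_py (hf : DifferentiableAt ℝ f p) :
    HasDerivAt (fun y => f (p.1, y)) (py f p) p.2 :=
  (hf.comp p.2 ((differentiableAt_const _).prodMk differentiableAt_id)).hasDerivAt

theorem DifferentiableAt.px_eq_fderiv (hf : DifferentiableAt ℝ f p) :
    px f p = fderiv ℝ f p (1, 0) :=
  hf.hasDerivAt_px.unique <|
    hf.hasFDerivAt.comp_hasDerivAt p.1 ((hasDerivAt_id _).prodMk (hasDerivAt_const _ _))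

theorem DifferentiableAt.py_eq_fderiv (hf : DifferentiableAt ℝ f p) :
    py f p = fderiv ℝ f p (0, 1) :=
  hf.hasDerivAt_py.unique <|
    hf.hasFDerivAt.comp_hasDerivAt p.2 ((hasDerivAt_const _ _).prodMk (hasDerivAt_id _))

theorem Differentiable.px_eq_fderiv (hf : Differentiable ℝ f) :
    px f = fun q => fderiv ℝ f q (1, 0) :=
  funext fun q => (hf q).px_eq_fderiv

theorem Differentiable.py_eq_fderiv (hf : Differentiable ℝ f) :
    py f = fun q => fderiv ℝ f q (0, 1) :=
  funext fun q => (hf q).py_eq_fderiv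

variable {n : WithTop ℕ∞}

theorem contDiff_px (hf : ContDiff ℝ (n + 1) f) : ContDiff ℝ n (px f) := by
  rw [(hf.differentiable (by simp)).px_eq_fderiv]
  exact (hf.fderiv_right le_rfl).clm_apply contDiff_const

theorem contDiff_py (hf : ContDiff ℝ (n + 1) f) : ContDiff ℝ n (py f) := by
  rw [(hf.differentiable (by simp)).py_eq_fderiv]
  exact (hf.fderiv_right le_rfl).clm_apply contDiff_const

theorem py_px_eq_px_py (hf : ContDiff ℝ 2 f) (p : ℝ × ℝ) :
    py (px f) p = px (py f) p := by
  have hf1 : Differentiable ℝ f := hf.differentiable two_ne_zero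
  have hDf : DifferentiableAt ℝ (fderiv ℝ f) p :=
    (hf.fderiv_right (m := 1) (by norm_num)).differentiable one_ne_zero p
  rw [(contDiff_px (n := 1) hf).differentiable one_ne_zero p |>.py_eq_fderiv,
    (contDiff_py (n := 1) hf).differentiable one_ne_zero p |>.px_eq_fderiv,
    hf1.px_eq_fderiv, hf1.py_eq_fderiv,
    fderiv_clm_apply hDf (differentiableAt_const _),
    fderiv_clm_apply hDf (differentiableAt_const _)]
  simpa using ((hf.contDiffAt (x := p)).isSymmSndFDerivAt (by simp)).eq (0, 1) (1, 0)

end PartialDerivatives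

section NormalizedDerivative

variable {a b : ℝ → ℝ} {a' b' t : ℝ}

theorem HasDerivAt.div_sqrt_sq_add_sq (ha : HasDerivAt a a' t) (hb : HasDerivAt b b' t)
    (hpos : 0 < a t ^ 2 + b t ^ 2) :
    HasDerivAt (fun s => b s / √(a s ^ 2 + b s ^ 2))
      (a t * (a t * b' - b t * a') / √(a t ^ 2 + b t ^ 2) ^ 3) t := by
  have hr : √(a t ^ 2 + b t ^ 2) ≠ 0 := (sqrt_pos.2 hpos).ne'
  have hsq : √(a t ^ 2 + b t ^ 2) ^ 2 = a t ^ 2 + b t ^ 2 := sq_sqrt hpos.le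
  have hN : HasDerivAt (fun s => a s ^ 2 + b s ^ 2) (2 * a t * a' + 2 * b t * b') t := by
    simpa using (ha.fun_pow 2).fun_add (hb.fun_pow 2)
  refine (hb.fun_div (hN.sqrt hpos.ne') hr).congr_deriv ?_
  field_simp
  rw [hsq]
  ring

theorem HasDerivAt.div_sqrt_sq_add_sq' (ha : HasDerivAt a a' t) (hb : HasDerivAt b b' t)
    (hpos : 0 < a t ^ 2 + b t ^ 2) :
    HasDerivAt (fun s => a s / √(a s ^ 2 + b s ^ 2))
      (b t * (b t * a' - a t * b') / √(a t ^ 2 + b t ^ 2) ^ 3) t := by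
  simpa only [add_comm (b _ ^ 2)] using hb.div_sqrt_sq_add_sq ha (by linarith)

end NormalizedDerivative

section Curl

variable {p : ℝ × ℝ}

theorem px_div_sqrt_sq_add_sq {f g : ℝ × ℝ → ℝ} (hf : DifferentiableAt ℝ f p)
    (hg : DifferentiableAt ℝ g p) (hpos : 0 < f p ^ 2 + g p ^ 2) :
    px (fun q => g q / √(f q ^ 2 + g q ^ 2)) p
      = f p * (f p * px g p - g p * px f p) / √(f p ^ 2 + g p ^ 2) ^ 3 :=
  (hf.hasDerivAt_px.div_sqrt_sq_add_sq hg.hasDerivAt_px hpos).deriv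

theorem py_div_sqrt_sq_add_sq {f g : ℝ × ℝ → ℝ} (hf : DifferentiableAt ℝ f p)
    (hg : DifferentiableAt ℝ g p) (hpos : 0 < f p ^ 2 + g p ^ 2) :
    py (fun q => f q / √(f q ^ 2 + g q ^ 2)) p
      = g p * (g p * py f p - f p * py g p) / √(f p ^ 2 + g p ^ 2) ^ 3 :=
  (hf.hasDerivAt_py.div_sqrt_sq_add_sq' hg.hasDerivAt_py hpos).deriv

theorem sq_add_sq_pos_of_ne {a b : ℝ} (hab : (a, b) ≠ (0, 0)) : 0 < a ^ 2 + b ^ 2 := by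
  refine (add_nonneg (sq_nonneg a) (sq_nonneg b)).lt_of_ne fun h => hab ?_
  obtain ⟨ha, hb⟩ := (add_eq_zero_iff_of_nonneg (sq_nonneg a) (sq_nonneg b)).mp h.symm
  rw [pow_eq_zero_iff two_ne_zero] at ha hb
  rw [ha, hb]

theorem curl_normalized_gradient {H : ℝ × ℝ → ℝ} (hH : ContDiff ℝ 2 H)
    (hp : (px H p, py H p) ≠ (0, 0)) :
    px (fun q => py H q / √(px H q ^ 2 + py H q ^ 2)) p
        - py (fun q => px H q / √(px H q ^ 2 + py H q ^ 2)) p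
      = (py (px H) p * (px H p ^ 2 - py H p ^ 2)
          - px H p * py H p * (px (px H) p - py (py H) p)) / √(px H p ^ 2 + py H p ^ 2) ^ 3 := by
  have hpx : DifferentiableAt ℝ (px H) p := (contDiff_px (n := 1) hH).differentiable one_ne_zero p
  have hpy : DifferentiableAt ℝ (py H) p := (contDiff_py (n := 1) hH).differentiable one_ne_zero p
  have hpos := sq_add_sq_pos_of_ne hp
  rw [px_div_sqrt_sq_add_sq hpx hpy hpos, py_div_sqrt_sq_add_sq hpx hpy hpos,
    ← py_px_eq_px_py hH]
  ring

end Curl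

theorem stmt4_general (H : ℝ × ℝ → ℝ) (U : Set (ℝ × ℝ))
    (hH : ContDiff ℝ 2 H)
    (hgrad : ∀ p ∈ U, (px H p, py H p) ≠ (0, 0)) :
    (∀ p ∈ U,
      px (fun q => py H q / Real.sqrt ((px H q) ^ 2 + (py H q) ^ 2)) p
        = py (fun q => px H q / Real.sqrt ((px H q) ^ 2 + (py H q) ^ 2)) p)
    ↔ (∀ p ∈ U,
      py (px H) p * ((px H p) ^ 2 - (py H p) ^ 2)
        = px H p * py H p * (px (px H) p - py (py H) p)) := by
  refine forall₂_congr fun p hp => ?_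
  have hr : √(px H p ^ 2 + py H p ^ 2) ^ 3 ≠ 0 :=
    pow_ne_zero 3 (sqrt_pos.2 (sq_add_sq_pos_of_ne (hgrad p hp))).ne'
  rw [← sub_eq_zero, curl_normalized_gradient hH (hgrad p hp), div_eq_zero_iff, or_iff_left hr,
    sub_eq_zero]

theorem stmt4 (H : ℝ × ℝ → ℝ) (U : Set (ℝ × ℝ)) (hU : IsOpen U)
    (hH : ContDiff ℝ 2 H)
    (hgrad : ∀ p ∈ U, (px H p, py H p) ≠ (0, 0)) :
    (∀ p ∈ U,
      px (fun q => py H q / Real.sqrt ((px H q) ^ 2 + (py H q) ^ 2)) p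
        = py (fun q => px H q / Real.sqrt ((px H q) ^ 2 + (py H q) ^ 2)) p)
    ↔ (∀ p ∈ U,
      py (px H) p * ((px H p) ^ 2 - (py H p) ^ 2)
        = px H p * py H p * (px (px H) p - py (py H) p)) :=
  stmt4_general H U hH hgrad
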